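/- arXiv:1409.2023 — 3 statements merged into one kernel-verified Lean document; each statement's English description precedes it below -/
import Mathlib

section
/- Suppose u : ℝ → ℝ is continuously differentiable, bounded above, and satisfies u'(φ) > u'(-φ) for all φ > 0. Then lim_{x → -∞} u(x) > -∞ (i.e., u is also bounded below). -/
/-!
The even part `v x = u x + u (-x)` has derivative `u' x - u' (-x)`, which is positive for `x > 0`,
so `v` is increasing on `[0, ∞)` and `v x ≥ v 0 = 2 u 0` for every `x`. Hence
`u x ≥ 2 u 0 - u (-x) ≥ 2 u 0 - C`, where `C` is an upper bound of `u`.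
-/

open Set

theorem HasDerivAt.add_comp_neg {f : ℝ → ℝ} {f' f'' x : ℝ} (hx : HasDerivAt f f' x)
    (hnx : HasDerivAt f f'' (-x)) : HasDerivAt (fun y => f y + f (-y)) (f' - f'') x := by
  rw [sub_eq_add_neg, ← mul_neg_one f'']
  exact hx.add (hnx.comp x (hasDerivAt_neg x))

theorem monotoneOn_add_comp_neg_Ici {f : ℝ → ℝ} (hf : Differentiable ℝ f)
    (hf' : ∀ x, 0 < x → deriv f (-x) ≤ deriv f x) :
    MonotoneOn (fun y => f y + f (-y)) (Ici 0) := by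
  have hderiv : ∀ x, HasDerivAt (fun y => f y + f (-y)) (deriv f x - deriv f (-x)) x :=
    fun x => (hf x).hasDerivAt.add_comp_neg (hf (-x)).hasDerivAt
  refine monotoneOn_of_deriv_nonneg (convex_Ici 0)
    (hf.continuous.add (hf.continuous.comp continuous_neg)).continuousOn
    (fun x _ => (hderiv x).differentiableAt.differentiableWithinAt) fun x hx => ?_
  rw [interior_Ici] at hx
  rw [(hderiv x).deriv, sub_nonneg]
  exact hf' x hx

theorem two_mul_le_add_comp_neg {f : ℝ → ℝ} (hf : Differentiable ℝ f)
    (hf' : ∀ x, 0 < x → deriv f (-x) ≤ deriv f x) (x : ℝ) :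
    2 * f 0 ≤ f x + f (-x) := by
  have of_nonneg : ∀ y, 0 ≤ y → 2 * f 0 ≤ f y + f (-y) := fun y hy => by
    simpa [two_mul] using monotoneOn_add_comp_neg_Ici hf hf' self_mem_Ici hy hy
  rcases le_total 0 x with hx | hx
  · exact of_nonneg x hx
  · simpa [add_comm] using of_nonneg (-x) (neg_nonneg.mpr hx)

/-- If `u : ℝ → ℝ` is `C¹`, bounded above, and `u'(φ) > u'(-φ)` for all `φ > 0`,
then `u` is bounded below. -/
theorem bounded_below_of_deriv_condition
    (u : ℝ → ℝ) (hu : ContDiff ℝ 1 u)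
    (hbdd : ∃ C, ∀ x, u x ≤ C)
    (hderiv : ∀ φ : ℝ, 0 < φ → deriv u (-φ) < deriv u φ) :
    BddBelow (Set.range u) := by
  obtain ⟨C, hC⟩ := hbdd
  have heven := two_mul_le_add_comp_neg (hu.differentiable one_ne_zero)
    fun x hx => (hderiv x hx).le
  refine ⟨2 * u 0 - C, ?_⟩
  rintro _ ⟨x, rfl⟩
  linarith [heven x, hC (-x)]
end

section
/- Let u : ℝ → ℝ be continuously differentiable, bounded above, with u'(φ) > u'(-φ) for all φ > 0, and let ΔS take values ±1 with probability 1/2 each. Then there is no φ* ∈ ℝ maximizing φ ↦ E[u(φ·ΔS)] over ℝ. -/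
open MeasureTheory Filter Set Topology ENNReal

/-! Since `ΔS = ±1` with probability `1/2` each, the expected utility of the position `φ` is
`g φ = (u φ + u (-φ)) / 2`. The function `g` is even, and `g' φ = (u' φ - u' (-φ)) / 2 > 0`
for `φ > 0`, so `g` is strictly increasing on `[0, ∞)`: the position `|φ| + 1` always beats `φ`. -/

section Rademacher

variable {Ω : Type*} [MeasurableSpace Ω] {P : Measure Ω} [IsProbabilityMeasure P]
  {X : Ω → ℝ}

theorem ae_eq_one_or_eq_neg_one (hX : Measurable X) (h1 : P {ω | X ω = 1} = 1 / 2)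
    (h2 : P {ω | X ω = -1} = 1 / 2) : ∀ᵐ ω ∂P, X ω = 1 ∨ X ω = -1 := by
  have hA : MeasurableSet {ω | X ω = 1} := hX (measurableSet_singleton 1)
  have hB : MeasurableSet {ω | X ω = -1} := hX (measurableSet_singleton (-1))
  have hdisj : Disjoint {ω | X ω = 1} {ω | X ω = -1} :=
    Set.disjoint_left.2 fun ω (h : X ω = 1) (h' : X ω = -1) => by norm_num [h] at h'
  have hunion : P ({ω | X ω = 1} ∪ {ω | X ω = -1}) = 1 := by
    rw [measure_union hdisj hB, h1, h2, ENNReal.add_halves]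
  rw [ae_iff]
  convert (prob_compl_eq_zero_iff (hA.union hB)).2 hunion using 2
  ext ω
  simp [not_or]

theorem integral_comp_of_rademacher {E : Type*} [NormedAddCommGroup E] [NormedSpace ℝ E]
    [CompleteSpace E] (hX : Measurable X) (h1 : P {ω | X ω = 1} = 1 / 2)
    (h2 : P {ω | X ω = -1} = 1 / 2) (f : ℝ → E) :
    ∫ ω, f (X ω) ∂P = (2 : ℝ)⁻¹ • (f 1 + f (-1)) := by
  have hA : MeasurableSet {ω | X ω = 1} := hX (measurableSet_singleton 1)
  have hB : MeasurableSet {ω | X ω = -1} := hX (measurableSet_singleton (-1))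
  have hsplit : (fun ω => f (X ω)) =ᵐ[P]
      fun ω => {ω | X ω = 1}.indicator (fun _ => f 1) ω +
        {ω | X ω = -1}.indicator (fun _ => f (-1)) ω := by
    filter_upwards [ae_eq_one_or_eq_neg_one hX h1 h2] with ω hω
    rcases hω with hω | hω <;> norm_num [Set.indicator, hω]
  rw [integral_congr_ae hsplit, integral_add ((integrable_const _).indicator hA)
    ((integrable_const _).indicator hB), integral_indicator_const _ hA,
    integral_indicator_const _ hB, measureReal_def, measureReal_def, h1, h2, smul_add]
  norm_num

end Rademacher

theorem strictMonoOn_add_comp_neg {u : ℝ → ℝ} (hu : Differentiable ℝ u)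
    (hderiv : ∀ φ : ℝ, 0 < φ → deriv u (-φ) < deriv u φ) :
    StrictMonoOn (fun φ => u φ + u (-φ)) (Ici 0) := by
  refine strictMonoOn_of_deriv_pos (convex_Ici 0)
    (hu.continuous.add (hu.continuous.comp continuous_neg)).continuousOn fun φ hφ => ?_
  rw [interior_Ici] at hφ
  rw [deriv_fun_add (g := fun φ => u (-φ)) (hu φ) (hu.comp differentiable_neg φ), deriv_comp_neg,
    ← sub_eq_add_neg, sub_pos]
  exact hderiv φ hφ

theorem lt_abs_add_one_of_even_of_strictMonoOn {g : ℝ → ℝ} (heven : ∀ x, g (-x) = g x)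
    (hmono : StrictMonoOn g (Ici 0)) (x : ℝ) : g x < g (|x| + 1) := by
  have hx : g |x| = g x := by
    rcases abs_choice x with h | h <;> rw [h]
    exact heven x
  rw [← hx]
  exact hmono (abs_nonneg x) (by positivity : (0 : ℝ) ≤ |x| + 1) (lt_add_one _)

theorem no_optimal_strategy_general
    {Ω : Type*} [MeasurableSpace Ω] (P : Measure Ω) [IsProbabilityMeasure P]
    (u : ℝ → ℝ) (hu : ContDiff ℝ 1 u)
    (hderiv : ∀ φ : ℝ, 0 < φ → deriv u (-φ) < deriv u φ)
    (ΔS : Ω → ℝ) (hmeas : Measurable ΔS)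
    (h1 : P {ω | ΔS ω = 1} = 1/2) (h2 : P {ω | ΔS ω = -1} = 1/2) :
    ¬ ∃ φstar : ℝ, ∀ φ : ℝ, ∫ ω, u (φ * ΔS ω) ∂P ≤ ∫ ω, u (φstar * ΔS ω) ∂P := by
  rintro ⟨φstar, hmax⟩
  have hexpect (φ : ℝ) : ∫ ω, u (φ * ΔS ω) ∂P = (2 : ℝ)⁻¹ * (u φ + u (-φ)) := by
    simpa using integral_comp_of_rademacher hmeas h1 h2 (fun x => u (φ * x))
  have hbetter := lt_abs_add_one_of_even_of_strictMonoOn (fun φ => by simp [add_comm])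
    (strictMonoOn_add_comp_neg (hu.differentiable one_ne_zero) hderiv) φstar
  have hle := hmax (|φstar| + 1)
  rw [hexpect, hexpect] at hle
  linarith

/-- For `u` C¹, bounded above, with `u'(φ) > u'(-φ)` for `φ > 0`, and
`ΔS = ±1` with probability `1/2` each, no `φ*` maximises `φ ↦ E[u(φ·ΔS)]` over `ℝ`. -/
theorem no_optimal_strategy
    {Ω : Type*} [MeasurableSpace Ω] (P : Measure Ω) [IsProbabilityMeasure P]
    (u : ℝ → ℝ) (hu : ContDiff ℝ 1 u)
    (hbdd : ∃ C, ∀ x, u x ≤ C)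
    (hderiv : ∀ φ : ℝ, 0 < φ → deriv u (-φ) < deriv u φ)
    (ΔS : Ω → ℝ) (hmeas : Measurable ΔS)
    (h1 : P {ω | ΔS ω = 1} = 1/2) (h2 : P {ω | ΔS ω = -1} = 1/2) :
    ¬ ∃ φstar : ℝ, ∀ φ : ℝ, ∫ ω, u (φ * ΔS ω) ∂P ≤ ∫ ω, u (φstar * ΔS ω) ∂P :=
  no_optimal_strategy_general P u hu hderiv ΔS hmeas h1 h2
end

section
/- Let X_n, n ∈ ℕ, be real random variables converging in law to X, let u₊, u₋ : [0,∞) → [0,∞) and w₊, w₋ : [0,1] → [0,1] be continuous non-decreasing with u_±(0)=0, w_±(0)=0, w_±(1)=1, and u₊ bounded above. Define V(Y) := ∫₀^∞ w₊(P(u₊(Y₊) ≥ y)) dy − ∫₀^∞ w₋(P(u₋(Y₋) ≥ y)) dy. Then limsup_n V(X_n) ≤ V(X). -/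
/-!
Convergence in law of `Xₙ` to `X` passes to `g(Xₙ)` for the continuous maps
`g = u₊((·)₊)` and `g = u₋((·)₋)`, so `P(g(Xₙ) ≥ y) → P(g(X) ≥ y)` at every `y` that is
not an atom of the law of `g(X)`, i.e. for Lebesgue-a.e. `y`; by continuity of `w_±` the
integrands of `V` converge a.e. Since `u₊ ≤ C`, the positive integrands vanish beyond `C` and
are bounded by `1`, so dominated convergence gives convergence of the positive parts, while
Fatou's lemma bounds the negative part of `V(X)` by the liminf of those of `V(Xₙ)`.
Subtracting in `EReal` gives the claim.
-/

open MeasureTheory Filter Set Topology ENNReal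

namespace EReal

lemma limsup_coe_ennreal_sub_le {α : Type*} {f : Filter α} [f.NeBot] {A B : α → ℝ≥0∞}
    {a b : ℝ≥0∞} (hA : limsup A f ≤ a) (ha : a ≠ ⊤) (hB : b ≤ liminf B f) :
    limsup (fun i => (A i : EReal) - B i) f ≤ (a : EReal) - b := by
  have hlimsup : limsup (fun i => (A i : EReal)) f = ((limsup A f : ℝ≥0∞) : EReal) :=
    (coe_ennreal_strictMono.monotone.map_limsup_of_continuousAt A
      continuous_coe_ennreal_ereal.continuousAt).symm
  have hliminf : liminf (fun i => (B i : EReal)) f = ((liminf B f : ℝ≥0∞) : EReal) :=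
    (coe_ennreal_strictMono.monotone.map_liminf_of_continuousAt B
      continuous_coe_ennreal_ereal.continuousAt).symm
  have hne_top : limsup (fun i => (A i : EReal)) f ≠ ⊤ := by
    rw [hlimsup, ne_eq, coe_ennreal_eq_top_iff]
    exact ne_top_of_le_ne_top ha hA
  calc limsup (fun i => (A i : EReal) - B i) f
      = limsup ((fun i => (A i : EReal)) + -fun i => (B i : EReal)) f := by
        simp only [sub_eq_add_neg]; rfl
    _ ≤ limsup (fun i => (A i : EReal)) f + limsup (-fun i => (B i : EReal)) f :=
        limsup_add_le (Or.inl (hlimsup ▸ coe_ennreal_ne_bot _)) (Or.inl hne_top)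
    _ = ((limsup A f : ℝ≥0∞) : EReal) - (liminf B f : ℝ≥0∞) := by
        rw [limsup_neg, hlimsup, hliminf, sub_eq_add_neg]
    _ ≤ (a : EReal) - b :=
        sub_le_sub (coe_ennreal_le_coe_ennreal_iff.2 hA) (coe_ennreal_le_coe_ennreal_iff.2 hB)

end EReal

namespace MeasureTheory

lemma tendstoInDistribution_of_forall_integral_tendsto {ι Ω E : Type*} {l : Filter ι}
    [MeasurableSpace Ω] {P : Measure Ω} [IsProbabilityMeasure P]
    [TopologicalSpace E] [MeasurableSpace E] [OpensMeasurableSpace E]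
    {X : ι → Ω → E} {Z : Ω → E} (hX : ∀ i, AEMeasurable (X i) P) (hZ : AEMeasurable Z P)
    (h : ∀ f : BoundedContinuousFunction E ℝ,
      Tendsto (fun i => ∫ ω, f (X i ω) ∂P) l (𝓝 (∫ ω, f (Z ω) ∂P))) :
    TendstoInDistribution X l Z (fun _ => P) P where
  forall_aemeasurable := hX
  aemeasurable_limit := hZ
  tendsto := by
    refine ProbabilityMeasure.tendsto_iff_forall_integral_tendsto.2 fun f => ?_
    simpa only [ProbabilityMeasure.coe_mk,
      integral_map (hX _) f.continuous.aestronglyMeasurable,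
      integral_map hZ f.continuous.aestronglyMeasurable] using h f

lemma TendstoInDistribution.ae_tendsto_measure_preimage_Ici {ι Ω' : Type*} {Ω : ι → Type*}
    {m : ∀ i, MeasurableSpace (Ω i)} {μ : (i : ι) → Measure (Ω i)}
    [∀ i, IsProbabilityMeasure (μ i)] [MeasurableSpace Ω'] {μ' : Measure Ω'}
    [IsProbabilityMeasure μ'] {l : Filter ι} {X : (i : ι) → Ω i → ℝ} {Z : Ω' → ℝ}
    (h : TendstoInDistribution X l Z μ μ') :
    ∀ᵐ y, Tendsto (fun i => μ i (X i ⁻¹' Ici y)) l (𝓝 (μ' (Z ⁻¹' Ici y))) := by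
  have hatoms : {y : ℝ | 0 < μ'.map Z {y}}.Countable :=
    Measure.countable_meas_pos_of_disjoint_iUnion (fun _ => measurableSet_singleton _)
      fun _ _ hyz => disjoint_singleton.2 hyz
  filter_upwards [hatoms.ae_notMem volume] with y hy
  have hnull : μ'.map Z (frontier (Ici y)) = 0 := by
    simpa only [frontier_Ici, mem_ofPred_eq, not_lt, nonpos_iff_eq_zero] using hy
  simpa only [ProbabilityMeasure.coe_mk,
    Measure.map_apply_of_aemeasurable (h.forall_aemeasurable _) measurableSet_Ici,
    Measure.map_apply_of_aemeasurable h.aemeasurable_limit measurableSet_Ici] using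
    ProbabilityMeasure.tendsto_measure_of_null_frontier_of_tendsto' h.tendsto hnull

lemma setLIntegral_Ioi_indicator_Iic_one_ne_top (a C : ℝ) :
    ∫⁻ y in Ioi a, (Iic C).indicator 1 y ≠ ⊤ := by
  rw [lintegral_indicator_one measurableSet_Iic, Measure.restrict_apply measurableSet_Iic,
    inter_comm, Ioi_inter_Iic]
  exact measure_Ioc_lt_top.ne

noncomputable def distortedTail {Ω : Type*} [MeasurableSpace Ω] (P : Measure Ω)
    (w g : ℝ → ℝ) (Y : Ω → ℝ) (y : ℝ) : ℝ≥0∞ :=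
  ENNReal.ofReal (w (P {ω | y ≤ g (Y ω)}).toReal)

section distortedTail

variable {Ω : Type*} [MeasurableSpace Ω] {P : Measure Ω} [IsProbabilityMeasure P]
  {w g : ℝ → ℝ}

lemma antitone_distortedTail (hw : MonotoneOn w (Icc 0 1)) (Y : Ω → ℝ) :
    Antitone (distortedTail P w g Y) := fun _ _ hy =>
  ENNReal.ofReal_le_ofReal <| hw ⟨measureReal_nonneg, measureReal_le_one⟩
    ⟨measureReal_nonneg, measureReal_le_one⟩ <| measureReal_mono fun _ hω => hy.trans hω

lemma distortedTail_le_indicator (hw : MonotoneOn w (Icc 0 1)) (hw0 : w 0 = 0) (hw1 : w 1 = 1)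
    {C : ℝ} (hg : ∀ x, g x ≤ C) (Y : Ω → ℝ) :
    distortedTail P w g Y ≤ (Iic C).indicator 1 := by
  intro y
  by_cases hy : y ≤ C
  · rw [indicator_of_mem (mem_Iic.2 hy)]
    exact ofReal_le_one.2 <| hw1 ▸ hw ⟨measureReal_nonneg, measureReal_le_one⟩
      ⟨zero_le_one, le_rfl⟩ measureReal_le_one
  · have hempty : {ω | y ≤ g (Y ω)} = ∅ :=
      eq_empty_of_forall_notMem fun ω hω => hy (le_trans hω (hg _))
    simp [distortedTail, hempty, hw0]

lemma lintegral_distortedTail_ne_top (hw : MonotoneOn w (Icc 0 1)) (hw0 : w 0 = 0)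
    (hw1 : w 1 = 1) {C : ℝ} (hg : ∀ x, g x ≤ C) (Y : Ω → ℝ) :
    ∫⁻ y in Ioi 0, distortedTail P w g Y y ≠ ⊤ :=
  ne_top_of_le_ne_top (setLIntegral_Ioi_indicator_Iic_one_ne_top 0 C)
    (lintegral_mono (distortedTail_le_indicator hw hw0 hw1 hg Y))

lemma TendstoInDistribution.ae_tendsto_distortedTail {ι : Type*} {l : Filter ι}
    {X : ι → Ω → ℝ} {Z : Ω → ℝ} (h : TendstoInDistribution X l Z (fun _ => P) P)
    (hw : ContinuousOn w (Icc 0 1)) (hg : Continuous g) :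
    ∀ᵐ y, Tendsto (fun i => distortedTail P w g (X i) y) l
      (𝓝 (distortedTail P w g Z y)) := by
  filter_upwards [(h.continuous_comp hg).ae_tendsto_measure_preimage_Ici] with y hy
  have hprob : Tendsto (fun i => (P {ω | y ≤ g (X i ω)}).toReal) l
      (𝓝[Icc 0 1] (P {ω | y ≤ g (Z ω)}).toReal) :=
    tendsto_nhdsWithin_of_tendsto_nhds_of_eventually_within _
      ((ENNReal.tendsto_toReal (measure_ne_top P _)).comp hy)
      (Eventually.of_forall fun _ => ⟨measureReal_nonneg, measureReal_le_one⟩)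
  exact (ENNReal.continuous_ofReal.tendsto _).comp
    ((hw _ ⟨measureReal_nonneg, measureReal_le_one⟩).tendsto.comp hprob)

variable {X : ℕ → Ω → ℝ} {Z : Ω → ℝ}

lemma TendstoInDistribution.tendsto_lintegral_distortedTail
    (h : TendstoInDistribution X atTop Z (fun _ => P) P) (hwc : ContinuousOn w (Icc 0 1))
    (hwm : MonotoneOn w (Icc 0 1)) (hw0 : w 0 = 0) (hw1 : w 1 = 1) (hgc : Continuous g)
    {C : ℝ} (hgC : ∀ x, g x ≤ C) :
    Tendsto (fun n => ∫⁻ y in Ioi 0, distortedTail P w g (X n) y) atTop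
      (𝓝 (∫⁻ y in Ioi 0, distortedTail P w g Z y)) :=
  tendsto_lintegral_of_dominated_convergence _
    (fun n => (antitone_distortedTail hwm (X n)).measurable)
    (fun n => ae_of_all _ (distortedTail_le_indicator hwm hw0 hw1 hgC (X n)))
    (setLIntegral_Ioi_indicator_Iic_one_ne_top 0 C)
    (ae_restrict_of_ae (h.ae_tendsto_distortedTail hwc hgc))

lemma TendstoInDistribution.lintegral_distortedTail_le_liminf
    (h : TendstoInDistribution X atTop Z (fun _ => P) P) (hwc : ContinuousOn w (Icc 0 1))
    (hwm : MonotoneOn w (Icc 0 1)) (hgc : Continuous g) :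
    ∫⁻ y in Ioi 0, distortedTail P w g Z y ≤
      liminf (fun n => ∫⁻ y in Ioi 0, distortedTail P w g (X n) y) atTop :=
  calc ∫⁻ y in Ioi 0, distortedTail P w g Z y
      = ∫⁻ y in Ioi 0, liminf (fun n => distortedTail P w g (X n) y) atTop :=
        lintegral_congr_ae <| (ae_restrict_of_ae (h.ae_tendsto_distortedTail hwc hgc)).mono
          fun _ hy => hy.liminf_eq.symm
    _ ≤ _ := lintegral_liminf_le fun n => (antitone_distortedTail hwm (X n)).measurable

end distortedTail

end MeasureTheory

theorem cpt_upper_semicontinuous_general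
    {Ω : Type*} [MeasurableSpace Ω] (P : Measure Ω) [IsProbabilityMeasure P]
    (X : ℕ → Ω → ℝ) (Xlim : Ω → ℝ)
    (hX : ∀ n, Measurable (X n)) (hXlim : Measurable Xlim)
    (hconv : ∀ f : BoundedContinuousFunction ℝ ℝ,
      Tendsto (fun n => ∫ ω, f (X n ω) ∂P) atTop (𝓝 (∫ ω, f (Xlim ω) ∂P)))
    (up um : ℝ → ℝ)
    (hupc : ContinuousOn up (Ici 0)) (humc : ContinuousOn um (Ici 0))
    (hupbdd : ∃ C, ∀ x : ℝ, 0 ≤ x → up x ≤ C)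
    (wp wm : ℝ → ℝ)
    (hwpc : ContinuousOn wp (Icc 0 1)) (hwmc : ContinuousOn wm (Icc 0 1))
    (hwpm : MonotoneOn wp (Icc 0 1)) (hwmm : MonotoneOn wm (Icc 0 1))
    (hwp0 : wp 0 = 0) (hwp1 : wp 1 = 1)
    (V : (Ω → ℝ) → EReal)
    (hV : ∀ Y : Ω → ℝ, V Y =
      ((∫⁻ y in Ioi (0:ℝ),
          ENNReal.ofReal (wp ((P {ω | y ≤ up (max (Y ω) 0)}).toReal))) : ℝ≥0∞)
        - ((∫⁻ y in Ioi (0:ℝ),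
          ENNReal.ofReal (wm ((P {ω | y ≤ um (max (-(Y ω)) 0)}).toReal))) : ℝ≥0∞)) :
    Filter.limsup (fun n => V (X n)) atTop ≤ V Xlim := by
  obtain ⟨C, hC⟩ := hupbdd
  set gp : ℝ → ℝ := fun x => up (max x 0)
  set gm : ℝ → ℝ := fun x => um (max (-x) 0)
  have hVtail : ∀ Y, V Y = ((∫⁻ y in Ioi 0, distortedTail P wp gp Y y : ℝ≥0∞) : EReal) -
      (∫⁻ y in Ioi 0, distortedTail P wm gm Y y : ℝ≥0∞) := hV
  have hgpc : Continuous gp :=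
    hupc.comp_continuous (by fun_prop) fun x => le_max_right x 0
  have hgmc : Continuous gm :=
    humc.comp_continuous (by fun_prop) fun x => le_max_right (-x) 0
  have hgpC : ∀ x, gp x ≤ C := fun x => hC _ (le_max_right x 0)
  have hlaw : TendstoInDistribution X atTop Xlim (fun _ => P) P :=
    tendstoInDistribution_of_forall_integral_tendsto (fun n => (hX n).aemeasurable)
      hXlim.aemeasurable hconv
  simp only [hVtail]
  exact EReal.limsup_coe_ennreal_sub_le
    (hlaw.tendsto_lintegral_distortedTail hwpc hwpm hwp0 hwp1 hgpc hgpC).limsup_eq.le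
    (lintegral_distortedTail_ne_top hwpm hwp0 hwp1 hgpC Xlim)
    (hlaw.lintegral_distortedTail_le_liminf hwmc hwmm hgmc)

/-- Upper semicontinuity of the CPT value along convergence in law: if
`Xₙ → X` in law and `V(Y) = ∫₀^∞ w₊(P(u₊(Y₊) ≥ y)) dy − ∫₀^∞ w₋(P(u₋(Y₋) ≥ y)) dy`
(valued in `EReal`, with `u₊` bounded above), then `limsup_n V(Xₙ) ≤ V(X)`. -/
theorem cpt_upper_semicontinuous
    {Ω : Type*} [MeasurableSpace Ω] (P : Measure Ω) [IsProbabilityMeasure P]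
    (X : ℕ → Ω → ℝ) (Xlim : Ω → ℝ)
    (hX : ∀ n, Measurable (X n)) (hXlim : Measurable Xlim)
    (hconv : ∀ f : BoundedContinuousFunction ℝ ℝ,
      Tendsto (fun n => ∫ ω, f (X n ω) ∂P) atTop (𝓝 (∫ ω, f (Xlim ω) ∂P)))
    (up um : ℝ → ℝ)
    (hupc : ContinuousOn up (Ici 0)) (humc : ContinuousOn um (Ici 0))
    (hupm : MonotoneOn up (Ici 0)) (humm : MonotoneOn um (Ici 0))
    (hup0 : up 0 = 0) (hum0 : um 0 = 0)
    (hupbdd : ∃ C, ∀ x : ℝ, 0 ≤ x → up x ≤ C)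
    (wp wm : ℝ → ℝ)
    (hwpc : ContinuousOn wp (Icc 0 1)) (hwmc : ContinuousOn wm (Icc 0 1))
    (hwpm : MonotoneOn wp (Icc 0 1)) (hwmm : MonotoneOn wm (Icc 0 1))
    (hwp0 : wp 0 = 0) (hwm0 : wm 0 = 0) (hwp1 : wp 1 = 1) (hwm1 : wm 1 = 1)
    (V : (Ω → ℝ) → EReal)
    (hV : ∀ Y : Ω → ℝ, V Y =
      ((∫⁻ y in Ioi (0:ℝ),
          ENNReal.ofReal (wp ((P {ω | y ≤ up (max (Y ω) 0)}).toReal))) : ℝ≥0∞)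
        - ((∫⁻ y in Ioi (0:ℝ),
          ENNReal.ofReal (wm ((P {ω | y ≤ um (max (-(Y ω)) 0)}).toReal))) : ℝ≥0∞)) :
    Filter.limsup (fun n => V (X n)) atTop ≤ V Xlim :=
  cpt_upper_semicontinuous_general P X Xlim hX hXlim hconv up um hupc humc hupbdd wp wm hwpc hwmc
    hwpm hwmm hwp0 hwp1 V hV
end
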